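/- Let λ ∈ ℝ and let μ be a nonzero λ-eigenmeasure of r̃+J̃. If the set Σ = {x ∈ S : r(x) = r̄} has positive Lebesgue measure, then λ > r̄, where r̄ = max_{x∈S} r(x). -/

import Mathlib

/-!
Write `J x = ∫_S K(y,x) μ(dy)`. Since `K > c₀` near the diagonal, `J x ≥ c₀ μ(B(x, ε₀))`, so `J`
is positive within `ε₀` of `supp μ`. Conversely, testing the eigen-equation on an open set where
`J > 0` (and using `r ≥ 0`) shows that `μ` charges it, so every interior point of `S` where
`J > 0` lies in `supp μ`. Hence `supp μ` spreads by `ε₀`-steps through `Ω`, and connectedness of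
`Ω` gives `supp μ = S`, so `J > 0` on all of `S`. On `Σ`, where `r ≡ r̄`, the eigen-equation reads
`(λ - r̄) μ(Σ) = ∫_Σ J dx > 0`.
-/

open MeasureTheory Filter Topology

/-- A finite positive Borel measure μ on S is a λ-eigenmeasure of the operator r̃+J̃ if for
every Borel set A ⊆ S one has ∫_A r dμ + ∫_A (∫_S K(y,x) μ(dy)) dx = λ μ(A). -/
def IsEigenmeasure {d : ℕ} (S : Set (EuclideanSpace ℝ (Fin d)))
    (r : EuclideanSpace ℝ (Fin d) → ℝ)
    (K : EuclideanSpace ℝ (Fin d) → EuclideanSpace ℝ (Fin d) → ℝ)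
    (lam : ℝ) (μ : MeasureTheory.Measure (EuclideanSpace ℝ (Fin d))) : Prop :=
  ∀ A : Set (EuclideanSpace ℝ (Fin d)), MeasurableSet A → A ⊆ S →
    (∫ x in A, r x ∂μ) + (∫ x in A, (∫ y in S, K y x ∂μ)) = lam * (μ A).toReal

open Metric Set

lemma setIntegral_pos_of_forall_pos {X : Type*} [MeasurableSpace X] {μ : Measure X}
    {s : Set X} {f : X → ℝ} (hs : MeasurableSet s) (hfi : IntegrableOn f s μ)
    (hf : ∀ x ∈ s, 0 < f x) (hμs : 0 < μ s) : 0 < ∫ x in s, f x ∂μ := by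
  rw [setIntegral_pos_iff_support_of_nonneg_ae
    ((ae_restrict_iff' hs).2 (ae_of_all _ fun x hx => (hf x hx).le)) hfi]
  rwa [inter_eq_self_of_subset_right (s := Function.support f) fun x hx => (hf x hx).ne']

lemma IsPreconnected.eq_closure_of_inter_ball_subset {X : Type*} [PseudoMetricSpace X]
    {Ω T : Set X} (hΩ : IsPreconnected Ω) (hΩo : IsOpen Ω) (hT : IsClosed T)
    (hTne : T.Nonempty) (hTΩ : T ⊆ closure Ω) {ε : ℝ} (hε : 0 < ε)
    (hspread : ∀ z ∈ T, Ω ∩ ball z ε ⊆ T) : T = closure Ω := by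
  have hint : Ω ∩ T ⊆ interior T := fun z hz =>
    mem_interior_iff_mem_nhds.2 <| mem_of_superset
      (inter_mem (hΩo.mem_nhds hz.1) (ball_mem_nhds z hε)) (hspread z hz.2)
  have hΩT : Ω ⊆ interior T := by
    refine hΩ.subset_of_closure_inter_subset isOpen_interior ?_ ?_
    · obtain ⟨z, hz⟩ := hTne
      obtain ⟨x, hxΩ, hzx⟩ := Metric.mem_closure_iff.1 (hTΩ hz) ε hε
      have hx : x ∈ T := hspread z hz ⟨hxΩ, mem_ball'.2 hzx⟩
      exact ⟨x, hxΩ, hint ⟨hxΩ, hx⟩⟩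
    · rintro x ⟨hxT, hxΩ⟩
      exact hint ⟨hxΩ, closure_minimal interior_subset hT hxT⟩
  exact hTΩ.antisymm (closure_minimal (hΩT.trans interior_subset) hT)

lemma continuousOn_kernel_left {X Y : Type*} [TopologicalSpace X] [TopologicalSpace Y]
    {K : X → Y → ℝ} {S : Set X} {T : Set Y}
    (hK : ContinuousOn (fun q : X × Y => K q.1 q.2) (S ×ˢ T)) {x : Y} (hx : x ∈ T) :
    ContinuousOn (fun y => K y x) S :=
  hK.comp (continuousOn_id.prodMk continuousOn_const) fun _ hy => ⟨hy, hx⟩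

section KernelIntegral

variable {X : Type*} [MetricSpace X] [MeasurableSpace X] [OpensMeasurableSpace X]
  {S : Set X} {K : X → X → ℝ} {μ : Measure X} [IsFiniteMeasure μ]

lemma continuousOn_setIntegral_kernel (hS : IsCompact S)
    (hK : ContinuousOn (fun q : X × X => K q.1 q.2) (S ×ˢ S)) :
    ContinuousOn (fun x => ∫ y in S, K y x ∂μ) S := by
  obtain ⟨M, hM⟩ := (hS.prod hS).exists_bound_of_continuousOn hK
  have hSm : MeasurableSet S := hS.isClosed.measurableSet
  refine continuousOn_of_dominated (bound := fun _ => M)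
    (fun x hx => (continuousOn_kernel_left hK hx).aestronglyMeasurable hSm)
    (fun x hx => (ae_restrict_iff' hSm).2 (ae_of_all _ fun y hy => hM (y, x) ⟨hy, hx⟩))
    (integrable_const M) ((ae_restrict_iff' hSm).2 (ae_of_all _ fun y hy => ?_))
  exact hK.comp (continuousOn_const.prodMk continuousOn_id) fun _ hx => ⟨hy, hx⟩

lemma mul_measureReal_ball_le_setIntegral_kernel (hS : IsCompact S)
    (hK : ContinuousOn (fun q : X × X => K q.1 q.2) (S ×ˢ S))
    (hKnn : ∀ x ∈ S, ∀ y ∈ S, 0 ≤ K x y) {ε c : ℝ}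
    (hKlb : ∀ x ∈ S, ∀ y ∈ S, dist y x < ε → c < K x y) (hμS : μ Sᶜ = 0)
    {x : X} (hx : x ∈ S) :
    c * μ.real (ball x ε) ≤ ∫ y in S, K y x ∂μ := by
  have hSm : MeasurableSet S := hS.isClosed.measurableSet
  have hint : IntegrableOn (fun y => K y x) S μ :=
    (continuousOn_kernel_left hK hx).integrableOn_compact hS
  calc c * μ.real (ball x ε) = ∫ _ in ball x ε ∩ S, c ∂μ := by
        rw [setIntegral_const, smul_eq_mul, measureReal_def, measureReal_def,
          measure_inter_conull hμS, mul_comm]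
    _ ≤ ∫ y in ball x ε ∩ S, K y x ∂μ :=
        setIntegral_mono_on (integrableOn_const (measure_ne_top _ _))
          (hint.mono_set inter_subset_right) (isOpen_ball.measurableSet.inter hSm)
          fun y hy => (hKlb y hy.2 x hx (mem_ball'.1 hy.1)).le
    _ ≤ ∫ y in S, K y x ∂μ :=
        setIntegral_mono_set hint
          ((ae_restrict_iff' hSm).2 (ae_of_all _ fun y hy => hKnn y hy x hx))
          inter_subset_right.eventuallyLE

lemma setIntegral_kernel_pos_of_mem_support (hS : IsCompact S)
    (hK : ContinuousOn (fun q : X × X => K q.1 q.2) (S ×ˢ S))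
    (hKnn : ∀ x ∈ S, ∀ y ∈ S, 0 ≤ K x y) {ε c : ℝ} (hc : 0 < c)
    (hKlb : ∀ x ∈ S, ∀ y ∈ S, dist y x < ε → c < K x y) (hμS : μ Sᶜ = 0)
    {x z : X} (hx : x ∈ S) (hz : z ∈ μ.support) (hxz : dist x z < ε) :
    0 < ∫ y in S, K y x ∂μ := by
  have hball : 0 < μ (ball x ε) :=
    (Measure.mem_support_iff_forall z).1 hz _ (isOpen_ball.mem_nhds (mem_ball'.2 hxz))
  exact (mul_pos hc (ENNReal.toReal_pos hball.ne' (measure_ne_top _ _))).trans_le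
    (mul_measureReal_ball_le_setIntegral_kernel hS hK hKnn hKlb hμS hx)

end KernelIntegral

namespace IsEigenmeasure

variable {d : ℕ} {S : Set (EuclideanSpace ℝ (Fin d))} {r : EuclideanSpace ℝ (Fin d) → ℝ}
  {K : EuclideanSpace ℝ (Fin d) → EuclideanSpace ℝ (Fin d) → ℝ} {lam : ℝ}
  {μ : Measure (EuclideanSpace ℝ (Fin d))}

lemma measure_ne_zero (hμ : IsEigenmeasure S r K lam μ) {A : Set (EuclideanSpace ℝ (Fin d))}
    (hA : MeasurableSet A) (hAS : A ⊆ S) (hr : ∀ x ∈ A, 0 ≤ r x)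
    (hJ : 0 < ∫ x in A, ∫ y in S, K y x ∂μ) : μ A ≠ 0 := by
  intro h0
  have h := hμ A hA hAS
  rw [h0, ENNReal.toReal_zero, mul_zero] at h
  linarith [setIntegral_nonneg (μ := μ) hA hr]

lemma mem_support_of_setIntegral_kernel_pos (hμ : IsEigenmeasure S r K lam μ)
    (hS : IsCompact S) (hr : ∀ x ∈ S, 0 ≤ r x)
    (hJ : ContinuousOn (fun x => ∫ y in S, K y x ∂μ) S) {x : EuclideanSpace ℝ (Fin d)}
    (hx : x ∈ interior S) (hJx : 0 < ∫ y in S, K y x ∂μ) : x ∈ μ.support := by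
  rw [Measure.mem_support_iff_forall]
  intro U hU
  set V := interior U ∩ (interior S ∩ (fun x => ∫ y in S, K y x ∂μ) ⁻¹' Ioi 0)
  have hVo : IsOpen V := isOpen_interior.inter
    ((hJ.mono interior_subset).isOpen_inter_preimage isOpen_interior isOpen_Ioi)
  have hxV : x ∈ V := ⟨mem_interior_iff_mem_nhds.2 hU, hx, hJx⟩
  have hVS : V ⊆ S := fun y hy => interior_subset hy.2.1
  have hJV : 0 < ∫ x in V, ∫ y in S, K y x ∂μ :=
    setIntegral_pos_of_forall_pos hVo.measurableSet ((hJ.integrableOn_compact hS).mono_set hVS)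
      (fun y hy => hy.2.2) (hVo.measure_pos volume ⟨x, hxV⟩)
  exact (pos_iff_ne_zero.2 (hμ.measure_ne_zero hVo.measurableSet hVS
    (fun y hy => hr y (hVS hy)) hJV)).trans_le (measure_mono fun y hy => interior_subset hy.1)

lemma support_eq [IsFiniteMeasure μ] (hμ : IsEigenmeasure S r K lam μ)
    {Ω : Set (EuclideanSpace ℝ (Fin d))} (hΩ : IsPreconnected Ω) (hΩo : IsOpen Ω)
    (hSΩ : S = closure Ω) (hS : IsCompact S) (hr : ∀ x ∈ S, 0 ≤ r x)
    (hK : ContinuousOn (fun q : EuclideanSpace ℝ (Fin d) × EuclideanSpace ℝ (Fin d) =>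
      K q.1 q.2) (S ×ˢ S))
    (hKnn : ∀ x ∈ S, ∀ y ∈ S, 0 ≤ K x y) {ε c : ℝ} (hε : 0 < ε) (hc : 0 < c)
    (hKlb : ∀ x ∈ S, ∀ y ∈ S, dist y x < ε → c < K x y) (hμne : μ ≠ 0) (hμS : μ Sᶜ = 0) :
    μ.support = S := by
  have hΩS : Ω ⊆ interior S := interior_maximal (hSΩ ▸ subset_closure) hΩo
  have hsupp : μ.support ⊆ S :=
    Measure.support_subset_of_isClosed hS.isClosed (mem_ae_iff.2 hμS)
  have hspread : ∀ z ∈ μ.support, Ω ∩ ball z ε ⊆ μ.support := fun z hz x hx =>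
    hμ.mem_support_of_setIntegral_kernel_pos hS hr (continuousOn_setIntegral_kernel hS hK)
      (hΩS hx.1) (setIntegral_kernel_pos_of_mem_support hS hK hKnn hc hKlb hμS
        (interior_subset (hΩS hx.1)) hz (mem_ball.1 hx.2))
  rw [hSΩ] at hsupp ⊢
  exact hΩ.eq_closure_of_inter_ball_subset hΩo Measure.isClosed_support
    (Measure.nonempty_support hμne) hsupp hε hspread

end IsEigenmeasure

theorem stmt7_general {d : ℕ}
    (Ω S : Set (EuclideanSpace ℝ (Fin d)))
    (hΩopen : IsOpen Ω)
    (hΩconn : IsConnected Ω) (hSdef : S = closure Ω)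
    (hScomp : IsCompact S)
    (r : EuclideanSpace ℝ (Fin d) → ℝ) (hr : ContinuousOn r S)
    (hrpos : ∀ x ∈ S, 0 < r x)
    (K : EuclideanSpace ℝ (Fin d) → EuclideanSpace ℝ (Fin d) → ℝ)
    (hK : ContinuousOn (fun q : EuclideanSpace ℝ (Fin d) × EuclideanSpace ℝ (Fin d) =>
      K q.1 q.2) (S ×ˢ S))
    (hKnn : ∀ x ∈ S, ∀ y ∈ S, 0 ≤ K x y)
    (ε₀ c₀ : ℝ) (hε₀ : 0 < ε₀) (hc₀ : 0 < c₀)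
    (hKlb : ∀ x ∈ S, ∀ y ∈ S, dist y x < ε₀ → c₀ < K x y)
    (μ : Measure (EuclideanSpace ℝ (Fin d))) [IsFiniteMeasure μ]
    (hμne : μ ≠ 0) (hμS : μ Sᶜ = 0)
    (lam : ℝ) (hμ : IsEigenmeasure S r K lam μ)
    (rbar : ℝ)
    (hSig : 0 < volume {x ∈ S | r x = rbar}) :
    rbar < lam := by
  set Sig := {x ∈ S | r x = rbar}
  have hrnn : ∀ x ∈ S, 0 ≤ r x := fun x hx => (hrpos x hx).le
  have hsupp : μ.support = S := hμ.support_eq hΩconn.isPreconnected hΩopen hSdef hScomp hrnn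
    hK hKnn hε₀ hc₀ hKlb hμne hμS
  have hJ : ContinuousOn (fun x => ∫ y in S, K y x ∂μ) S :=
    continuousOn_setIntegral_kernel hScomp hK
  have hSigm : MeasurableSet Sig :=
    (hr.preimage_isClosed_of_isClosed hScomp.isClosed isClosed_singleton).measurableSet
  have hSigS : Sig ⊆ S := fun x hx => hx.1
  have hJSig : 0 < ∫ x in Sig, ∫ y in S, K y x ∂μ :=
    setIntegral_pos_of_forall_pos hSigm ((hJ.integrableOn_compact hScomp).mono_set hSigS)
      (fun x hx => setIntegral_kernel_pos_of_mem_support hScomp hK hKnn hc₀ hKlb hμS hx.1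
        (hsupp ▸ hx.1) (by rwa [dist_self])) hSig
  have heigen := hμ Sig hSigm hSigS
  rw [setIntegral_congr_fun hSigm (g := fun _ => rbar) fun x hx => hx.2, setIntegral_const,
    smul_eq_mul, measureReal_def] at heigen
  exact lt_of_mul_lt_mul_right (by linarith : rbar * (μ Sig).toReal < lam * (μ Sig).toReal)
    ENNReal.toReal_nonneg

/-- If the set Σ = {x ∈ S : r(x) = r̄} has positive Lebesgue measure, then every nonzero
λ-eigenmeasure of r̃+J̃ satisfies λ > r̄, where r̄ = max_S r. -/
theorem stmt7 {d : ℕ}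
    (Ω S : Set (EuclideanSpace ℝ (Fin d)))
    (hΩne : Ω.Nonempty) (hΩopen : IsOpen Ω) (hΩbdd : Bornology.IsBounded Ω)
    (hΩconn : IsConnected Ω) (hSdef : S = closure Ω)
    (hScomp : IsCompact S) (hSvol : 0 < volume S)
    (r : EuclideanSpace ℝ (Fin d) → ℝ) (hr : ContinuousOn r S)
    (hrpos : ∀ x ∈ S, 0 < r x)
    (K : EuclideanSpace ℝ (Fin d) → EuclideanSpace ℝ (Fin d) → ℝ)
    (hK : ContinuousOn (fun q : EuclideanSpace ℝ (Fin d) × EuclideanSpace ℝ (Fin d) =>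
      K q.1 q.2) (S ×ˢ S))
    (hKnn : ∀ x ∈ S, ∀ y ∈ S, 0 ≤ K x y)
    (ε₀ c₀ : ℝ) (hε₀ : 0 < ε₀) (hc₀ : 0 < c₀)
    (hKlb : ∀ x ∈ S, ∀ y ∈ S, dist y x < ε₀ → c₀ < K x y)
    (μ : Measure (EuclideanSpace ℝ (Fin d))) [IsFiniteMeasure μ]
    (hμne : μ ≠ 0) (hμS : μ Sᶜ = 0)
    (lam : ℝ) (hμ : IsEigenmeasure S r K lam μ)
    (rbar : ℝ) (hrbar : IsGreatest (r '' S) rbar)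
    (hSig : 0 < volume {x ∈ S | r x = rbar}) :
    rbar < lam :=
  stmt7_general Ω S hΩopen hΩconn hSdef hScomp r hr hrpos K hK hKnn ε₀ c₀ hε₀ hc₀ hKlb μ hμne hμS
    lam hμ rbar hSig
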